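/- If P is a lattice-face d-polytope, then the projection of its set of lattice points equals the set of lattice points of its projection: π(L(P)) = L(π(P)). -/

import Mathlib

open MeasureTheory Polynomial

noncomputable section

/-- The lattice points of `ℝ^d`: points all of whose coordinates are integers. -/
def latticePts (d : ℕ) : Set (Fin d → ℝ) := {x | ∀ i, ∃ n : ℤ, x i = (n : ℝ)}

/-- The projection `π^{(d-k)} : ℝ^d → ℝ^k` forgetting the last `d - k` coordinates
(for `k ≤ d`; junk value `0` in out-of-range coordinates otherwise). -/
def projTo (d k : ℕ) (x : Fin d → ℝ) : Fin k → ℝ :=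
  fun i => if h : (i : ℕ) < d then x ⟨(i : ℕ), h⟩ else 0

/-- A polytope with vertex set `V ⊆ ℝ^d` is a lattice-face polytope if for every
`0 ≤ k ≤ d-1` and every `(k+1)`-subset `U ⊆ V`, `π^{(d-k)}(aff(U) ∩ ℤ^d) = ℤ^k`. -/
def IsLatticeFace (d : ℕ) (V : Finset (Fin d → ℝ)) : Prop :=
  ∀ k : ℕ, k < d → ∀ U : Finset (Fin d → ℝ), U ⊆ V → U.card = k + 1 →
    projTo d k '' ((affineSpan ℝ (U : Set (Fin d → ℝ)) : Set (Fin d → ℝ)) ∩ latticePts d)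
      = latticePts k

/-- The last coordinate of a point of `ℝ^d`. -/
def lastCoord (d : ℕ) (x : Fin d → ℝ) : ℝ :=
  if h : 0 < d then x ⟨d - 1, by omega⟩ else 0

/-- The negative boundary `NB(P)`: points of `P` minimizing the last coordinate in
their fiber over `π(P)`. -/
def NB (d : ℕ) (P : Set (Fin d → ℝ)) : Set (Fin d → ℝ) :=
  {x | x ∈ P ∧ ∀ y ∈ P, projTo d (d - 1) y = projTo d (d - 1) x → lastCoord d x ≤ lastCoord d y}

/-- The positive boundary `PB(P)`: points of `P` maximizing the last coordinate in
their fiber over `π(P)`. -/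
def PB (d : ℕ) (P : Set (Fin d → ℝ)) : Set (Fin d → ℝ) :=
  {x | x ∈ P ∧ ∀ y ∈ P, projTo d (d - 1) y = projTo d (d - 1) x → lastCoord d y ≤ lastCoord d x}

/-- `i(P,m)`: the number of lattice points in the dilate `mP`. -/
def ehr (d : ℕ) (P : Set (Fin d → ℝ)) (m : ℕ) : ℕ :=
  (latticePts d ∩ (fun x => (m : ℝ) • x) '' P).ncard

/-- `î(P,m)`: the number of lattice points in the interior of the dilate `mP`. -/
def intEhr (d : ℕ) (P : Set (Fin d → ℝ)) (m : ℕ) : ℕ :=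
  (latticePts d ∩ interior ((fun x => (m : ℝ) • x) '' P)).ncard

/-- The `j`-th coordinate (`0`-indexed) of a point of `ℝ^d`, junk value `0` if `j ≥ d`. -/
def coordN {d : ℕ} (w : Fin d → ℝ) (j : ℕ) : ℝ := if h : j < d then w ⟨j, h⟩ else 0

/-- The vertex occurring in row `p` (0-indexed) of the matrices `X(σ,k)`, `Y(σ,k)`:
vertex `v_{σ(p+1)}` for `p < k`, and `v_{d+1}` for the last row of `X(σ,k)`. -/
def rowVert (d : ℕ) (v : Fin (d + 1) → Fin d → ℝ) (σ : Equiv.Perm (Fin d)) (k p : ℕ) :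
    Fin d → ℝ :=
  if h : p < k ∧ p < d then v (Fin.castSucc (σ ⟨p, h.2⟩)) else v (Fin.last d)

/-- The matrix `X(σ,k)` with rows `(1, x_{σ(i),1},…,x_{σ(i),k})` for `1 ≤ i ≤ k`
followed by `(1, x_{d+1,1},…,x_{d+1,k})`. -/
def Xmat (d : ℕ) (v : Fin (d + 1) → Fin d → ℝ) (σ : Equiv.Perm (Fin d)) (k : ℕ) :
    Matrix (Fin (k + 1)) (Fin (k + 1)) ℝ :=
  Matrix.of fun p q =>
    if (q : ℕ) = 0 then 1 else coordN (rowVert d v σ k (p : ℕ)) ((q : ℕ) - 1)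

/-- The matrix `Y(σ,k)` with rows `(1, x_{σ(i),1},…,x_{σ(i),k-1})` for `1 ≤ i ≤ k`. -/
def Ymat (d : ℕ) (v : Fin (d + 1) → Fin d → ℝ) (σ : Equiv.Perm (Fin d)) (k : ℕ) :
    Matrix (Fin k) (Fin k) ℝ :=
  Matrix.of fun p q =>
    if (q : ℕ) = 0 then 1 else coordN (rowVert d v σ k (p : ℕ)) ((q : ℕ) - 1)

/-- The matrix `X̃(σ,k;x)`: `X(σ,k)` with its last row replaced by `(1, x_1,…,x_k)`. -/
def Xtil (d : ℕ) (v : Fin (d + 1) → Fin d → ℝ) (σ : Equiv.Perm (Fin d)) (k : ℕ)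
    (x : Fin d → ℝ) : Matrix (Fin (k + 1)) (Fin (k + 1)) ℝ :=
  Matrix.of fun p q =>
    if (q : ℕ) = 0 then 1
    else if (p : ℕ) < k then coordN (rowVert d v σ k (p : ℕ)) ((q : ℕ) - 1)
    else coordN x ((q : ℕ) - 1)

/-- `z(σ,k) = det X(σ,k) / det Y(σ,k)`; note `z(σ,0) = 1`. -/
def zc (d : ℕ) (v : Fin (d + 1) → Fin d → ℝ) (σ : Equiv.Perm (Fin d)) (k : ℕ) : ℝ :=
  (Xmat d v σ k).det / (Ymat d v σ k).det

/-- The minor `m(σ,k;j)` of `X̃(σ,k;x)` obtained by deleting the last row and the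
`(j+1)`-st column (it does not depend on `x`). -/
def minorM (d : ℕ) (v : Fin (d + 1) → Fin d → ℝ) (σ : Equiv.Perm (Fin d)) (k j : ℕ) : ℝ :=
  (Matrix.of fun p q : Fin k =>
    Xmat d v σ k (Fin.castSucc p) (if (q : ℕ) < j + 1 then Fin.castSucc q else q.succ)).det

/-- A `d`-simplex with vertices `v_1, …, v_{d+1}` is in general position if its vertices
are affinely independent and for every `0 ≤ k ≤ d-1` and every `(k+1)`-subset `U` of the
vertex set, `π^{(d-k)}(conv U)` is a `k`-simplex. -/
def SimplexGenPos (d : ℕ) (v : Fin (d + 1) → Fin d → ℝ) : Prop :=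
  AffineIndependent ℝ v ∧
    ∀ k : ℕ, k < d → ∀ U : Finset (Fin (d + 1)), U.card = k + 1 →
      affineSpan ℝ (projTo d k '' (v '' (U : Set (Fin (d + 1))))) = ⊤

/-- A lattice-face `d`-simplex, given by its `d+1` affinely independent vertices. -/
def SimplexLatticeFace (d : ℕ) (v : Fin (d + 1) → Fin d → ℝ) : Prop :=
  AffineIndependent ℝ v ∧
    ∀ k : ℕ, k < d → ∀ U : Finset (Fin (d + 1)), U.card = k + 1 →
      projTo d k ''
          ((affineSpan ℝ (v '' (U : Set (Fin (d + 1)))) : Set (Fin d → ℝ)) ∩ latticePts d)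
        = latticePts k

open scoped Classical in
/-- The sign of a facet `F` of `P`: `+1` if `F` has a relative-interior point on the
positive boundary, `-1` if on the negative boundary, `0` otherwise. -/
def facetSign (d : ℕ) (P F : Set (Fin d → ℝ)) : ℝ :=
  if ∃ x ∈ intrinsicInterior ℝ F, x ∈ PB d P then 1
  else if ∃ x ∈ intrinsicInterior ℝ F, x ∈ NB d P then -1
  else 0

/-- The Bernoulli polynomial `B_n(x)`, as a real polynomial. -/
def bernR (n : ℕ) : Polynomial ℝ := (Polynomial.bernoulli n).map (algebraMap ℚ ℝ)

/-- The `k`-th power sum polynomial `P_k(x) = (B_{k+1}(x+1) - B_{k+1}(0))/(k+1)`. -/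
def PkR (k : ℕ) : Polynomial ℝ :=
  Polynomial.C (((k : ℝ) + 1)⁻¹) *
    ((bernR (k + 1)).comp (Polynomial.X + 1) - Polynomial.C ((bernR (k + 1)).eval 0))

/-- The extension of the summation operation: for a polynomial `h(s) = Σ_k h_k s^k`,
`Σ_{s=1}^{u} h := h_0 u + Σ_{k ≥ 1} h_k P_k(u)`, as a polynomial in the upper bound `u`. -/
def extSumPoly (h : Polynomial ℝ) : Polynomial ℝ :=
  Polynomial.C (h.coeff 0) * Polynomial.X +
    ∑ k ∈ Finset.Icc 1 h.natDegree, Polynomial.C (h.coeff k) * PkR k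

/-- `fdPoly n a` is the polynomial (in the first variable `a_1`) expressing
`f_{n+1}(a_1, a 0, a 1, …)`, defined recursively by `f_1(a_1) = a_1` and
`f_d(a_1,…,a_d) = Σ_{s=1}^{a_1} f_{d-1}(a_2 s, a_3, …, a_d)` using the extended sum. -/
def fdPoly : ℕ → (ℕ → ℝ) → Polynomial ℝ
  | 0, _ => Polynomial.X
  | n + 1, a =>
      extSumPoly ((fdPoly n (fun i => a (i + 1))).comp (Polynomial.C (a 0) * Polynomial.X))

/-- `f_d(a_1, …, a_d)` where `a_k = a (k-1)` (0-indexed). -/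
def fd (d : ℕ) (a : ℕ → ℝ) : ℝ := (fdPoly (d - 1) (fun i => a (i + 1))).eval (a 0)

/-- `g_d(b_1, …, b_d) = f_d(b_1/b_0, b_2/b_1, …, b_d/b_{d-1})` where `b_k = b k` and
`b 0 = 1` by convention. -/
def gd (d : ℕ) (b : ℕ → ℝ) : ℝ := fd d (fun i => b (i + 1) / b i)

/-- `x̄` for an integer: `x̄ = x` if `x ≥ 0` and `x̄ = -x-1` if `x < 0`. -/
def barNat (n : ℤ) : ℕ := if 0 ≤ n then n.toNat else (-n - 1).toNat

/-- The half-open segment `Ω(conv(0,x))`: `(0,x]` if `x ≥ 0` and `(x,0]` if `x < 0`. -/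
def hoSeg (x : ℝ) : Set ℝ := if 0 ≤ x then Set.Ioc 0 x else Set.Ioc x 0

/-- The previous coordinate `s_{k-1}` of a point `s ∈ ℝ^d`, with `s_0 = 1`. -/
def sPrev (d : ℕ) (s : Fin d → ℝ) (k : Fin d) : ℝ :=
  if (k : ℕ) = 0 then 1 else s ⟨(k : ℕ) - 1, lt_of_le_of_lt (Nat.sub_le _ _) k.isLt⟩

/-- The nested sum `Σ_{s_1=1}^{⌊a_1 sp⌋¯} Σ_{s_2=1}^{⌊a_2 s_1⌋¯} ⋯ 1` over positive
integers. -/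
def nestedCount : ℕ → (ℕ → ℝ) → ℕ → ℕ
  | 0, _, _ => 1
  | n + 1, a, sp =>
      ∑ s ∈ Finset.Icc 1 (barNat ⌊a 0 * (sp : ℝ)⌋), nestedCount n (fun i => a (i + 1)) s

/-- The nested extended sum `Σ_{s_1=1}^{\bar{a_1 s_0}} ⋯ Σ_{s_d=1}^{\bar{a_d s_{d-1}}} 1`,
as a polynomial in `s_0`, where for positive `s` the bar is `a s` if `a > 0` and
`-a s - 1` if `a < 0`. -/
def barNested : ℕ → (ℕ → ℝ) → Polynomial ℝ
  | 0, _ => 1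
  | n + 1, a =>
      (extSumPoly (barNested n (fun i => a (i + 1)))).comp
        (if 0 < a 0 then Polynomial.C (a 0) * Polynomial.X
         else -(Polynomial.C (a 0) * Polynomial.X) - 1)

/-- Row vertex for the hat matrices: `v_{σ(p+1)}` for `p < d`. -/
def rowVert' (d : ℕ) (v : Fin (d + 1) → Fin d → ℝ) (σ : Equiv.Perm (Fin d)) (p : ℕ) :
    Fin d → ℝ :=
  if h : p < d then v (Fin.castSucc (σ ⟨p, h⟩)) else v (Fin.last d)

/-- The matrix `X̂(σ,k)` with entries `x̂_{σ(p),q} = x_{σ(p),q} - x_{d+1,q}`. -/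
def XhatM (d : ℕ) (v : Fin (d + 1) → Fin d → ℝ) (σ : Equiv.Perm (Fin d)) (k : ℕ) :
    Matrix (Fin k) (Fin k) ℝ :=
  Matrix.of fun p q =>
    coordN (rowVert' d v σ (p : ℕ)) (q : ℕ) - coordN (v (Fin.last d)) (q : ℕ)

/-- The matrix `Ŷ(σ,k)` with rows `(1, x̂_{σ(p),1},…,x̂_{σ(p),k-1})`. -/
def YhatM (d : ℕ) (v : Fin (d + 1) → Fin d → ℝ) (σ : Equiv.Perm (Fin d)) (k : ℕ) :
    Matrix (Fin k) (Fin k) ℝ :=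
  Matrix.of fun p q =>
    if (q : ℕ) = 0 then 1
    else coordN (rowVert' d v σ (p : ℕ)) ((q : ℕ) - 1) - coordN (v (Fin.last d)) ((q : ℕ) - 1)

/-- `ẑ(σ,k) = det X̂(σ,k) / det Ŷ(σ,k)`. -/
def zhat (d : ℕ) (v : Fin (d + 1) → Fin d → ℝ) (σ : Equiv.Perm (Fin d)) (k : ℕ) : ℝ :=
  (XhatM d v σ k).det / (YhatM d v σ k).det

end

/-!
Over a lattice point `y` of `π(P)`, take the lowest point `m` of `P` in the fiber over `y`. It
is not interior to `P`, so by Carathéodory it is a convex combination of `k + 1 ≤ d` vertices.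
Their affine span `A` has dimension at most `k`, and the lattice-face property says that
`π^{(d-k)}` maps `A ∩ ℤ^d` onto `ℤ^k`; hence `π^{(d-k)}` is injective on `A`. The first `k`
coordinates of `m` are those of `y`, hence integers, so `m` is the lattice point of `A` above
them.
-/

open Set Topology

def projToLinear (d k : ℕ) : (Fin d → ℝ) →ₗ[ℝ] (Fin k → ℝ) where
  toFun := projTo d k
  map_add' x y := by
    funext i
    simp only [projTo, Pi.add_apply]
    split_ifs <;> simp
  map_smul' c x := by
    funext i
    simp only [projTo, Pi.smul_apply, RingHom.id_apply]
    split_ifs <;> simp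

@[simp]
lemma coe_projToLinear (d k : ℕ) : ⇑(projToLinear d k) = projTo d k := rfl

lemma continuous_projTo (d k : ℕ) : Continuous (projTo d k) :=
  (projToLinear d k).continuous_of_finiteDimensional

lemma projTo_projTo {d n k : ℕ} (hk : k ≤ n) (x : Fin d → ℝ) :
    projTo n k (projTo d n x) = projTo d k x := by
  funext i
  simp only [projTo]
  split_ifs <;> first | rfl | omega

lemma projTo_single_last (n : ℕ) (c : ℝ) :
    projTo (n + 1) n (Pi.single (Fin.last n) c) = 0 := by
  funext i
  simp [projTo, Fin.ext_iff, i.isLt.ne]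

lemma projTo_mem_latticePts {d k : ℕ} {x : Fin d → ℝ} (hx : x ∈ latticePts d) :
    projTo d k x ∈ latticePts k := by
  intro i
  unfold projTo
  split_ifs
  · exact hx _
  · exact ⟨0, by simp⟩

lemma affineSpan_latticePts (k : ℕ) : affineSpan ℝ (latticePts k) = ⊤ := by
  have h0 : (0 : Fin k → ℝ) ∈ latticePts k := fun _ => ⟨0, by simp⟩
  rw [AffineSubspace.affineSpan_eq_top_iff_vectorSpan_eq_top_of_nonempty ℝ _ _ ⟨0, h0⟩,
    vectorSpan_eq_span_vsub_set_right ℝ h0]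
  simp only [vsub_eq_sub, sub_zero, image_id']
  rw [eq_top_iff, ← (Pi.basisFun ℝ (Fin k)).span_eq]
  refine Submodule.span_mono ?_
  rintro _ ⟨i, rfl⟩ j
  by_cases hij : j = i
  · exact ⟨1, by simp [hij]⟩
  · exact ⟨0, by simp [hij]⟩

lemma AffineSubspace.injOn_of_map_eq_top {𝕜 V P V₂ P₂ : Type*} [Field 𝕜]
    [AddCommGroup V] [Module 𝕜 V] [AddTorsor V P] [AddCommGroup V₂] [Module 𝕜 V₂]
    [AddTorsor V₂ P₂] [FiniteDimensional 𝕜 V] [FiniteDimensional 𝕜 V₂]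
    {A : AffineSubspace 𝕜 P} {f : P →ᵃ[𝕜] P₂}
    (hdim : Module.finrank 𝕜 A.direction ≤ Module.finrank 𝕜 V₂) (hA : A.map f = ⊤) :
    InjOn f A := by
  set g := f.linear.domRestrict A.direction
  have hg : Function.Surjective g := by
    rw [← LinearMap.range_eq_top, LinearMap.range_domRestrict, ← AffineSubspace.map_direction,
      hA, AffineSubspace.direction_top]
  have hg' : Function.Injective g :=
    (LinearMap.injective_iff_surjective_of_finrank_eq_finrank
      (hdim.antisymm (LinearMap.finrank_le_finrank_of_surjective hg))).mpr hg
  intro x hx y hy hxy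
  have hv : g ⟨x -ᵥ y, AffineSubspace.vsub_mem_direction hx hy⟩ = 0 := by
    simp [g, hxy]
  rw [← vsub_eq_zero_iff_eq]
  simpa using hg' (hv.trans g.map_zero.symm)

lemma mem_latticePts_of_mem_affineSpan {d k : ℕ} {U : Finset (Fin d → ℝ)} (hU : U.card = k + 1)
    (hUk : projTo d k '' ((affineSpan ℝ (U : Set (Fin d → ℝ)) : Set (Fin d → ℝ)) ∩ latticePts d)
      = latticePts k)
    {x : Fin d → ℝ} (hx : x ∈ affineSpan ℝ (U : Set (Fin d → ℝ)))
    (hxk : projTo d k x ∈ latticePts k) : x ∈ latticePts d := by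
  classical
  set A := affineSpan ℝ (U : Set (Fin d → ℝ))
  have hdim : Module.finrank ℝ A.direction ≤ Module.finrank ℝ (Fin k → ℝ) := by
    have := finrank_vectorSpan_image_finset_le ℝ id U hU
    rwa [Finset.image_id, ← direction_affineSpan, ← Module.finrank_fin_fun ℝ (n := k)] at this
  have hA : A.map (projToLinear d k).toAffineMap = ⊤ := by
    rw [eq_top_iff, ← affineSpan_latticePts, ← hUk, affineSpan_le, AffineSubspace.coe_map]
    exact image_mono inter_subset_left
  obtain ⟨z, ⟨hzA, hz⟩, hzx⟩ := hUk.symm ▸ hxk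
  rwa [← AffineSubspace.injOn_of_map_eq_top hdim hA hzA hx hzx]

lemma exists_finset_card_le_finrank_of_mem_convexHull_of_notMem_interior {E : Type*}
    [NormedAddCommGroup E] [NormedSpace ℝ E] [FiniteDimensional ℝ E] {s : Set E} {x : E}
    (hx : x ∈ convexHull ℝ s) (hint : x ∉ interior (convexHull ℝ s)) :
    ∃ t : Finset E, ↑t ⊆ s ∧ t.card ≤ Module.finrank ℝ E ∧ x ∈ convexHull ℝ (t : Set E) := by
  classical
  obtain ⟨ι, _, z, w, hzs, hz, hw0, hw1, rfl⟩ := eq_pos_convex_span_of_mem_convexHull hx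
  refine ⟨Finset.univ.image z, by simpa using hzs, ?_, ?_⟩
  · have hle : Fintype.card ι ≤ Module.finrank ℝ E + 1 :=
      hz.card_le_finrank_succ.trans (Nat.succ_le_succ (Submodule.finrank_le _))
    have hne : Fintype.card ι ≠ Module.finrank ℝ E + 1 := by
      intro hcard
      let b : AffineBasis ι ℝ E :=
        ⟨z, hz, hz.affineSpan_eq_top_iff_card_eq_finrank_add_one.mpr hcard⟩
      refine hint (interior_mono (convexHull_mono hzs) ?_)
      rw [show range z = range b from rfl, b.interior_convexHull]
      intro i
      rw [← Finset.univ.affineCombination_eq_linear_combination z w hw1]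
      change 0 < b.coord i (Finset.univ.affineCombination ℝ b w)
      rw [b.coord_apply_combination_of_mem (Finset.mem_univ i) hw1]
      exact hw0 i
    exact Finset.card_image_le.trans (by rw [Finset.card_univ]; omega)
  · exact (convex_convexHull ℝ _).sum_mem (fun i _ => (hw0 i).le) hw1
      (fun i _ => subset_convexHull ℝ _ (by simp))

lemma exists_projTo_eq_notMem_interior {n : ℕ} {P : Set (Fin (n + 1) → ℝ)} (hP : IsCompact P)
    {x : Fin (n + 1) → ℝ} (hx : x ∈ P) :
    ∃ m ∈ P, projTo (n + 1) n m = projTo (n + 1) n x ∧ m ∉ interior P := by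
  have hF : IsCompact (P ∩ projTo (n + 1) n ⁻¹' {projTo (n + 1) n x}) :=
    hP.inter_right (isClosed_singleton.preimage (continuous_projTo _ _))
  obtain ⟨m, ⟨hmP, hmx⟩, hmin⟩ :=
    hF.exists_isMinOn ⟨x, hx, rfl⟩ (continuous_apply (Fin.last n)).continuousOn
  refine ⟨m, hmP, hmx, fun hint => ?_⟩
  set e : Fin (n + 1) → ℝ := Pi.single (Fin.last n) 1
  have hdown : ∀ᶠ t in 𝓝 (0 : ℝ), m - t • e ∈ P :=
    ((by fun_prop : Continuous fun t : ℝ => m - t • e).tendsto' 0 m (by simp)).eventually_mem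
      (mem_interior_iff_mem_nhds.mp hint)
  obtain ⟨t, ht, htP⟩ := hdown.exists_gt
  have hproj : projTo (n + 1) n (m - t • e) = projTo (n + 1) n x := by
    rw [← coe_projToLinear, map_sub, map_smul, coe_projToLinear, projTo_single_last, smul_zero,
      sub_zero, hmx]
  exact ht.not_ge (by simpa [e] using hmin ⟨htP, hproj⟩)

theorem proj_latticePts_eq_latticePts_proj_general
    (d : ℕ) (hd : 1 ≤ d) (V : Finset (Fin d → ℝ))
    (hLF : IsLatticeFace d V) :
    projTo d (d - 1) '' (latticePts d ∩ convexHull ℝ (V : Set (Fin d → ℝ)))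
      = latticePts (d - 1) ∩ projTo d (d - 1) '' convexHull ℝ (V : Set (Fin d → ℝ)) := by
  obtain ⟨n, rfl⟩ : ∃ n, d = n + 1 := ⟨d - 1, by omega⟩
  rw [Nat.add_sub_cancel]
  refine Subset.antisymm (image_subset_iff.mpr fun x hx =>
    ⟨projTo_mem_latticePts hx.1, mem_image_of_mem _ hx.2⟩) ?_
  rintro _ ⟨hy, x, hxP, rfl⟩
  obtain ⟨m, hmP, hmx, hm⟩ := exists_projTo_eq_notMem_interior
    (V.finite_toSet.isCompact_convexHull (𝕜 := ℝ)) hxP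
  obtain ⟨U, hUV, hUcard, hmU⟩ :=
    exists_finset_card_le_finrank_of_mem_convexHull_of_notMem_interior hmP hm
  have hUne : U.Nonempty := Finset.coe_nonempty.mp (convexHull_nonempty_iff.mp ⟨m, hmU⟩)
  obtain ⟨k, hk⟩ : ∃ k, U.card = k + 1 := Nat.exists_eq_succ_of_ne_zero hUne.card_pos.ne'
  rw [Module.finrank_fin_fun ℝ] at hUcard
  have hmk : projTo (n + 1) k m ∈ latticePts k := by
    rw [← projTo_projTo (by omega : k ≤ n), hmx]
    exact projTo_mem_latticePts hy
  refine ⟨m, ⟨?_, hmP⟩, hmx⟩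
  exact mem_latticePts_of_mem_affineSpan hk (hLF k (by omega) U (Finset.coe_subset.mp hUV) hk)
    (convexHull_subset_affineSpan _ hmU) hmk

theorem proj_latticePts_eq_latticePts_proj
    (d : ℕ) (hd : 1 ≤ d) (V : Finset (Fin d → ℝ))
    (hspan : affineSpan ℝ (V : Set (Fin d → ℝ)) = ⊤)
    (hvert : (V : Set (Fin d → ℝ))
      = Set.extremePoints ℝ (convexHull ℝ (V : Set (Fin d → ℝ))))
    (hLF : IsLatticeFace d V) :
    projTo d (d - 1) '' (latticePts d ∩ convexHull ℝ (V : Set (Fin d → ℝ)))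
      = latticePts (d - 1) ∩ projTo d (d - 1) '' convexHull ℝ (V : Set (Fin d → ℝ)) :=
  proj_latticePts_eq_latticePts_proj_general d hd V hLF
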